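/- Minimum posterior standard deviation under a Matérn-type information-gain bound: assume k(x, x) ≤ 1 for all x ∈ X and that the Matérn-type information-gain hypothesis holds. Then for every integer T ≥ T̄_Mat and every sequence x₁, …, x_T ∈ X, min_{t ∈ {1, …, T}} σ(x_t; X_{t−1}) ≤ C̃_Mat^{1/2} · T^{−ν/d} · (ln T)^{ν/d}; moreover min_{t ∈ {1, …, T}} σ(x_t; X_{t−1}) ≤ 1 for every T ∈ ℕ₊. -/

import Mathlib

open Matrix

noncomputable section

/-- Gram matrix `K = [k(x_i, x_j)]` of the kernel `k` on the finite family `xs`. -/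
def gram {X ι : Type*} [Fintype ι] (k : X → X → ℝ) (xs : ι → X) :
    Matrix ι ι ℝ := fun i j => k (xs i) (xs j)

/-- Kernel vector `k_t(x) = (k(x₁, x), …, k(x_t, x))`. -/
def kvec {X ι : Type*} [Fintype ι] (k : X → X → ℝ) (xs : ι → X) (x : X) :
    ι → ℝ := fun i => k (xs i) x

/-- Regularized posterior variance `σ²_{λ²}(x; xs) = k(x,x) - k_t(x)ᵀ (K + λ² I)⁻¹ k_t(x)`.
For the empty family this is `k(x,x)`. -/
def postVar {X ι : Type*} [Fintype ι] [DecidableEq ι] (k : X → X → ℝ)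
    (xs : ι → X) (lam : ℝ) (x : X) : ℝ :=
  k x x - kvec k xs x ⬝ᵥ ((gram k xs + lam ^ 2 • (1 : Matrix ι ι ℝ))⁻¹ *ᵥ kvec k xs x)

/-- Noise-free posterior standard deviation `σ(x; xs) = inf_{λ > 0} σ_{λ²}(x; xs)`. -/
def postStd {X ι : Type*} [Fintype ι] [DecidableEq ι] (k : X → X → ℝ)
    (xs : ι → X) (x : X) : ℝ :=
  ⨅ lam : {l : ℝ // 0 < l}, Real.sqrt (postVar k xs lam.1 x)

/-- Maximum information gain `γ_T(λ²) = sup_{x₁,…,x_T} (1/2) ln det (I_T + λ⁻² K_T)`,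
a value in `[0, ∞]`. -/
def mig {X : Type*} (k : X → X → ℝ) (T : ℕ) (lam : ℝ) : ENNReal :=
  ⨆ xs : Fin T → X, ENNReal.ofReal
    ((1 / 2) * Real.log ((1 + (lam ^ 2)⁻¹ • gram k xs).det))

/-- The prefix `X_{t-1} = (x₁, …, x_{t-1})` of a finite sequence (`t` is 0-indexed). -/
def pre {X : Type*} {T : ℕ} (xs : Fin T → X) (t : Fin T) : Fin t.1 → X :=
  fun i => xs ⟨i.1, i.2.trans t.2⟩

/-- Noise-free posterior mean `μ(x; xs) = k_t(x)ᵀ K⁻¹ (f(x₁), …, f(x_t))ᵀ`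
(for the empty family this is `0`). -/
def postMean {X ι : Type*} [Fintype ι] [DecidableEq ι] (k : X → X → ℝ)
    (xs : ι → X) (f : X → ℝ) (x : X) : ℝ :=
  kvec k xs x ⬝ᵥ ((gram k xs)⁻¹ *ᵥ fun i => f (xs i))

/-- Noise-free posterior standard deviation in closed form,
`σ(x; xs) = (k(x,x) - k_t(x)ᵀ K⁻¹ k_t(x))^{1/2}` (for the empty family, `k(x,x)^{1/2}`). -/
def postStdInv {X ι : Type*} [Fintype ι] [DecidableEq ι] (k : X → X → ℝ)
    (xs : ι → X) (x : X) : ℝ :=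
  Real.sqrt (k x x - kvec k xs x ⬝ᵥ ((gram k xs)⁻¹ *ᵥ kvec k xs x))

/-- The first `t` points `X_t = (x₁, …, x_t)` of an infinite sequence. -/
def prefN {X : Type*} (xseq : ℕ → X) (t : ℕ) : Fin t → X := fun i => xseq i

/-! Writing `σ_t² = σ²_{λ²}(x_t; X_{t-1})`, the Schur complement of the last row and column of
`K_t + λ² I` gives `det (K_T + λ² I) = ∏_t (λ² + σ_t²)`, hence
`ln det (I + λ⁻² K_T) = ∑_t ln (1 + σ_t² / λ²) ≤ 2 γ_T(λ²)`. At `λ² = λ_T²` the choice of `C̃_Mat`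
makes the Matérn bound at most `T / 6`, so the sum is below `T ln 2` and some `σ_t ≤ λ_T`; the
noise-free `σ` is an infimum over `λ`, so it is smaller still. If `λ_T > 1`, and for the second
claim, `σ(x_1; ∅) ≤ k(x_1, x_1)^{1/2} ≤ 1` suffices. -/

theorem Matrix.det_succ_eq_det_castSucc_mul_schur {R : Type*} [CommRing R] {n : ℕ}
    (M : Matrix (Fin (n + 1)) (Fin (n + 1)) R)
    (hA : IsUnit (M.submatrix Fin.castSucc Fin.castSucc).det) :
    M.det = (M.submatrix Fin.castSucc Fin.castSucc).det *
      (M (Fin.last n) (Fin.last n) - (fun j => M (Fin.last n) j.castSucc) ⬝ᵥ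
        ((M.submatrix Fin.castSucc Fin.castSucc)⁻¹ *ᵥ fun i => M i.castSucc (Fin.last n))) := by
  set A := M.submatrix Fin.castSucc Fin.castSucc
  have := A.invertibleOfIsUnitDet hA
  have hlast : ∀ j : Fin 1, Fin.natAdd n j = Fin.last n := fun j => by
    rw [Subsingleton.elim j 0]; rfl
  have hblocks : M.submatrix finSumFinEquiv finSumFinEquiv =
      fromBlocks A (of fun i _ => M i.castSucc (Fin.last n))
        (of fun _ j => M (Fin.last n) j.castSucc) (of fun _ _ => M (Fin.last n) (Fin.last n)) := by
    ext (i | i) (j | j) <;> simp [A, hlast] <;> rfl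
  rw [← det_submatrix_equiv_self finSumFinEquiv, hblocks, det_fromBlocks₁₁, det_fin_one,
    invOf_eq_nonsing_inv]
  simp only [sub_apply, mul_apply, of_apply, dotProduct, mulVec, Finset.sum_mul, Finset.mul_sum]
  rw [Finset.sum_comm]
  ring_nf

section Kernel

variable {X : Type*} {k : X → X → ℝ} {lam : ℝ}

theorem gram_posSemidef (hsym : ∀ x y : X, k x y = k y x)
    (hpsd : ∀ (n : ℕ) (xv : Fin n → X) (c : Fin n → ℝ),
      0 ≤ ∑ i, ∑ j, c i * c j * k (xv i) (xv j))
    {n : ℕ} (xs : Fin n → X) : (_root_.gram k xs).PosSemidef := by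
  refine .of_dotProduct_mulVec_nonneg (.ext fun i j => hsym _ _) fun c => ?_
  refine (hpsd n xs c).trans_eq ?_
  simp only [dotProduct, mulVec, _root_.gram, Finset.mul_sum, star_trivial]
  exact Finset.sum_congr rfl fun i _ => Finset.sum_congr rfl fun j _ => by ring

theorem posDef_gram_add_sq_smul_one {ι : Type*} [Fintype ι] [DecidableEq ι] {xs : ι → X}
    (hK : (_root_.gram k xs).PosSemidef) (hlam : lam ≠ 0) :
    (_root_.gram k xs + lam ^ 2 • (1 : Matrix ι ι ℝ)).PosDef := by
  refine PosDef.posSemidef_add hK ?_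
  rw [smul_one_eq_diagonal]
  exact .diagonal fun _ => by positivity

theorem postVar_le {ι : Type*} [Fintype ι] [DecidableEq ι] {xs : ι → X}
    (hK : (_root_.gram k xs).PosSemidef) (hlam : lam ≠ 0) (x : X) :
    postVar k xs lam x ≤ k x x := by
  have := (posDef_gram_add_sq_smul_one hK hlam).inv.posSemidef.dotProduct_mulVec_nonneg
    (kvec k xs x)
  rw [star_trivial] at this
  rw [postVar]
  linarith

theorem det_gram_add_sq_smul_one_succ {n : ℕ} {xs : Fin (n + 1) → X}
    (hK : (_root_.gram k xs).PosSemidef) (hlam : lam ≠ 0) :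
    (_root_.gram k xs + lam ^ 2 • (1 : Matrix _ _ ℝ)).det =
      (_root_.gram k (Fin.init xs) + lam ^ 2 • (1 : Matrix _ _ ℝ)).det *
        (lam ^ 2 + postVar k (Fin.init xs) lam (xs (Fin.last n))) := by
  set M : Matrix (Fin (n + 1)) (Fin (n + 1)) ℝ := _root_.gram k xs + lam ^ 2 • 1
  have hsub : M.submatrix Fin.castSucc Fin.castSucc =
      _root_.gram k (Fin.init xs) + lam ^ 2 • (1 : Matrix _ _ ℝ) := by
    ext i j
    simp [M, one_apply, _root_.gram, Fin.init]
  have hcol : (fun i => M i.castSucc (Fin.last n)) = kvec k (Fin.init xs) (xs (Fin.last n)) := by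
    ext i
    simp [M, one_apply, _root_.gram, kvec, Fin.init, Fin.castSucc_ne_last]
  have hrow : (fun j => M (Fin.last n) j.castSucc) = kvec k (Fin.init xs) (xs (Fin.last n)) := by
    rw [← hcol]
    ext j
    exact (hK.isHermitian.add (PosSemidef.one.smul (sq_nonneg lam)).isHermitian).apply _ _
  have hA := (posDef_gram_add_sq_smul_one (hK.submatrix Fin.castSucc) hlam).det_pos
  rw [det_succ_eq_det_castSucc_mul_schur M (hsub ▸ hA.ne'.isUnit), hsub, hrow, hcol, postVar]
  congr 1
  simp [M, _root_.gram]
  ring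

theorem det_gram_add_sq_smul_one_eq_prod {n : ℕ} {xs : Fin n → X}
    (hK : (_root_.gram k xs).PosSemidef) (hlam : lam ≠ 0) :
    (_root_.gram k xs + lam ^ 2 • (1 : Matrix _ _ ℝ)).det =
      ∏ t, (lam ^ 2 + postVar k (pre xs t) lam (xs t)) := by
  induction n with
  | zero => simp
  | succ n ih =>
    rw [Fin.prod_univ_castSucc, det_gram_add_sq_smul_one_succ hK hlam,
      ih (xs := Fin.init xs) (hK.submatrix Fin.castSucc)]
    rfl

theorem det_one_add_inv_sq_smul_gram_eq_prod {n : ℕ} {xs : Fin n → X}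
    (hK : (_root_.gram k xs).PosSemidef) (hlam : lam ≠ 0) :
    (1 + (lam ^ 2)⁻¹ • _root_.gram k xs).det =
      ∏ t, (1 + postVar k (pre xs t) lam (xs t) / lam ^ 2) := by
  have hlam2 : lam ^ 2 ≠ 0 := pow_ne_zero 2 hlam
  have hnormalize : 1 + (lam ^ 2)⁻¹ • _root_.gram k xs =
      (lam ^ 2)⁻¹ • (_root_.gram k xs + lam ^ 2 • (1 : Matrix _ _ ℝ)) := by
    rw [smul_add, smul_smul, inv_mul_cancel₀ hlam2, one_smul, add_comm]
  rw [hnormalize, det_smul, det_gram_add_sq_smul_one_eq_prod hK hlam, Fintype.card_fin,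
    ← Fin.prod_const, ← Finset.prod_mul_distrib]
  refine Finset.prod_congr rfl fun t _ => ?_
  field_simp

theorem exists_postVar_le_sq {T : ℕ} (hT : 0 < T) {xs : Fin T → X}
    (hK : (_root_.gram k xs).PosSemidef) (hlam : lam ≠ 0)
    (hdet : Real.log (1 + (lam ^ 2)⁻¹ • _root_.gram k xs).det ≤ T * Real.log 2) :
    ∃ t, postVar k (pre xs t) lam (xs t) ≤ lam ^ 2 := by
  by_contra! h
  have hfactor (t : Fin T) : 2 < 1 + postVar k (pre xs t) lam (xs t) / lam ^ 2 := by
    linarith [(one_lt_div (sq_pos_of_ne_zero hlam)).2 (h t)]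
  rw [det_one_add_inv_sq_smul_gram_eq_prod hK hlam,
    Real.log_prod fun t _ => by linarith [hfactor t]] at hdet
  have := Finset.sum_lt_sum_of_nonempty (Finset.univ_nonempty_iff.2 ⟨⟨0, hT⟩⟩)
    fun t _ => Real.log_lt_log two_pos (hfactor t)
  simp only [Finset.sum_const, Finset.card_univ, Fintype.card_fin, nsmul_eq_mul] at this
  linarith

theorem postStd_le_sqrt_postVar {ι : Type*} [Fintype ι] [DecidableEq ι] (xs : ι → X) (x : X)
    (hlam : 0 < lam) : postStd k xs x ≤ √(postVar k xs lam x) :=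
  ciInf_le (f := fun l : {l : ℝ // 0 < l} => √(postVar k xs l.1 x))
    ⟨0, by rintro _ ⟨l, rfl⟩; exact Real.sqrt_nonneg _⟩ ⟨lam, hlam⟩

theorem sInf_postStd_le_of_postVar_le {T : ℕ} (xs : Fin T → X) {t : Fin T} (hlam : 0 < lam)
    (ht : postVar k (pre xs t) lam (xs t) ≤ lam ^ 2) :
    sInf (Set.range fun t : Fin T => postStd k (pre xs t) (xs t)) ≤ lam :=
  calc _ ≤ postStd k (pre xs t) (xs t) :=
        csInf_le (Set.finite_range _).bddBelow (Set.mem_range_self t)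
    _ ≤ √(postVar k (pre xs t) lam (xs t)) := postStd_le_sqrt_postVar _ _ hlam
    _ ≤ lam := (Real.sqrt_le_left hlam.le).2 ht

theorem sInf_postStd_le_one {T : ℕ} (hT : 0 < T) {xs : Fin T → X}
    (hK : (_root_.gram k xs).PosSemidef) (hk1 : ∀ x, k x x ≤ 1) :
    sInf (Set.range fun t : Fin T => postStd k (pre xs t) (xs t)) ≤ 1 :=
  sInf_postStd_le_of_postVar_le xs (t := ⟨0, hT⟩) one_pos <| by
    rw [one_pow]
    exact (postVar_le (xs := pre xs ⟨0, hT⟩) (hK.submatrix _) one_ne_zero _).trans (hk1 _)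

theorem sInf_postStd_le_of_log_det_le {T : ℕ} (hT : 0 < T) {xs : Fin T → X}
    (hK : (_root_.gram k xs).PosSemidef) (hlam : 0 < lam)
    (hdet : Real.log (1 + (lam ^ 2)⁻¹ • _root_.gram k xs).det ≤ T * Real.log 2) :
    sInf (Set.range fun t : Fin T => postStd k (pre xs t) (xs t)) ≤ lam :=
  have ⟨_, ht⟩ := exists_postVar_le_sq hT hK hlam.ne' hdet
  sInf_postStd_le_of_postVar_le xs hlam ht

theorem half_log_det_le_of_mig_le {T : ℕ} {b : ℝ} (hb : 0 ≤ b)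
    (hmig : mig k T lam ≤ ENNReal.ofReal b) (xs : Fin T → X) :
    1 / 2 * Real.log (1 + (lam ^ 2)⁻¹ • _root_.gram k xs).det ≤ b :=
  (ENNReal.ofReal_le_ofReal_iff hb).1 <| (le_iSup (fun ys : Fin T → X => ENNReal.ofReal
    (1 / 2 * Real.log (1 + (lam ^ 2)⁻¹ • _root_.gram k ys).det)) xs).trans hmig

end Kernel

section Matern

variable {C Ct : ℝ}

theorem mul_one_add_rpow_le_rpow_inv {β : ℝ} (hC : 0 < C) (hβ : 0 < β)
    (hCt : (2 + β) ^ β * (6 * C) ^ (1 + β) ≤ Ct) :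
    6 * C * (1 + β) ^ (β / (1 + β)) ≤ Ct ^ (1 + β)⁻¹ := by
  have hβ1 : (1 + β) * (1 + β)⁻¹ = 1 := mul_inv_cancel₀ (by positivity)
  calc 6 * C * (1 + β) ^ (β / (1 + β))
      ≤ 6 * C * (2 + β) ^ (β / (1 + β)) := by gcongr; linarith
    _ = ((2 + β) ^ β * (6 * C) ^ (1 + β)) ^ (1 + β)⁻¹ := by
      rw [Real.mul_rpow (by positivity) (by positivity), ← Real.rpow_mul (by positivity),
        ← Real.rpow_mul (by positivity), hβ1, Real.rpow_one, div_eq_mul_inv, mul_comm]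
    _ ≤ Ct ^ (1 + β)⁻¹ := by gcongr

/-- The Matérn bound on `γ_T(λ_T²)`, written with `p = 2ν` and `q = d`. -/
theorem matern_gain_le {p q T : ℝ} (hC : 0 < C) (hp : 0 < p) (hq : 0 < q) (hCt1 : 1 ≤ Ct)
    (hCt : (2 + p / q) ^ (p / q) * (6 * C) ^ (1 + p / q) ≤ Ct) (hT : 0 < T)
    (hlogT : 1 ≤ Real.log T) (hlam : Ct * T ^ (-(p / q)) * Real.log T ^ (p / q) ≤ 1) :
    C * (T / (Ct * T ^ (-(p / q)) * Real.log T ^ (p / q))) ^ (q / (p + q)) *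
      Real.log (T / (Ct * T ^ (-(p / q)) * Real.log T ^ (p / q))) ^ (p / (p + q)) ≤ T / 6 := by
  set β := p / q with hβ_def
  have hβ : 0 < β := by positivity
  have hexp₁ : q / (p + q) = (1 + β)⁻¹ := by rw [hβ_def]; field_simp; ring
  have hexp₂ : p / (p + q) = β / (1 + β) := by rw [hβ_def]; field_simp; ring
  rw [hexp₁, hexp₂]
  set L := Real.log T
  set D := Ct * L ^ β
  have hD : 1 ≤ D := one_le_mul_of_one_le_of_one_le hCt1 (Real.one_le_rpow hlogT hβ.le)
  have hβ1 : (1 + β) * (1 + β)⁻¹ = 1 := mul_inv_cancel₀ (by positivity)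
  have hu : T / (Ct * T ^ (-β) * L ^ β) = T ^ (1 + β) / D := by
    rw [Real.rpow_neg hT.le, Real.rpow_add hT, Real.rpow_one]
    field_simp
    rfl
  have hlam0 : 0 < Ct * T ^ (-β) * L ^ β := by positivity
  have hlog_nonneg : 0 ≤ Real.log (T ^ (1 + β) / D) := by
    rw [← hu, Real.log_div hT.ne' hlam0.ne']
    linarith [Real.log_nonpos hlam0.le hlam]
  have hlog_le : Real.log (T ^ (1 + β) / D) ≤ (1 + β) * L := by
    rw [← Real.log_rpow hT]
    exact Real.log_le_log (by positivity) (div_le_self (by positivity) hD)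
  have hpow : (T ^ (1 + β) / D) ^ (1 + β)⁻¹ = T / (Ct ^ (1 + β)⁻¹ * L ^ (β / (1 + β))) := by
    rw [Real.div_rpow (by positivity) (by positivity), ← Real.rpow_mul hT.le, hβ1,
      Real.rpow_one, Real.mul_rpow (by positivity) (by positivity),
      ← Real.rpow_mul (by positivity), div_eq_mul_inv β]
  have hconst := mul_one_add_rpow_le_rpow_inv hC hβ hCt
  rw [hu]
  calc C * (T ^ (1 + β) / D) ^ (1 + β)⁻¹ * Real.log (T ^ (1 + β) / D) ^ (β / (1 + β))
      ≤ C * (T ^ (1 + β) / D) ^ (1 + β)⁻¹ * ((1 + β) * L) ^ (β / (1 + β)) := by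
        gcongr
    _ = T * (C * (1 + β) ^ (β / (1 + β))) / Ct ^ (1 + β)⁻¹ := by
      rw [hpow, Real.mul_rpow (by positivity) (by positivity)]
      field_simp
    _ ≤ T / 6 := by
      rw [div_le_div_iff₀ (by positivity) (by norm_num)]
      nlinarith

end Matern

theorem sqrt_mul_rpow_neg_mul_rpow {c a b p q : ℝ} (hc : 0 ≤ c) (ha : 0 ≤ a) (hb : 0 ≤ b) :
    √(c * a ^ (-(2 * p / q)) * b ^ (2 * p / q)) = √c * a ^ (-(p / q)) * b ^ (p / q) := by
  have hsqrt {x : ℝ} (hx : 0 ≤ x) (s : ℝ) : √(x ^ (2 * s)) = x ^ s := by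
    rw [Real.sqrt_eq_rpow, ← Real.rpow_mul hx]
    ring_nf
  rw [show -(2 * p / q) = 2 * -(p / q) by ring, show 2 * p / q = 2 * (p / q) by ring,
    Real.sqrt_mul (by positivity), Real.sqrt_mul hc, hsqrt ha, hsqrt hb]

theorem min_postStd_matern_general
{X : Type*} (k : X → X → ℝ)
    (hsym : ∀ x y : X, k x y = k y x)
    (hpsd : ∀ (n : ℕ) (xv : Fin n → X) (c : Fin n → ℝ),
      0 ≤ ∑ i, ∑ j, c i * c j * k (xv i) (xv j))
    (hk1 : ∀ x : X, k x x ≤ 1)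
    (CMat lamBar : ℝ) (hCMat : 0 < CMat) (hlamBar : 0 < lamBar)
    (T0 : ℕ) (d : ℕ) (hd : 1 ≤ d) (ν : ℝ) (hν : 0 < ν)
    (hgain : ∀ lam : ℝ, 0 < lam → lam ≤ lamBar → ∀ t : ℕ, T0 ≤ t →
      mig k t lam ≤ ENNReal.ofReal
        (CMat * ((t : ℝ) / lam ^ 2) ^ ((d : ℝ) / (2 * ν + (d : ℝ))) *
          Real.log ((t : ℝ) / lam ^ 2) ^ (2 * ν / (2 * ν + (d : ℝ)))))
    (Ctil : ℝ) (hCtil : Ctil = max 1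
      ((2 + 2 * ν / (d : ℝ)) ^ (2 * ν / (d : ℝ)) * (6 * CMat) ^ (1 + 2 * ν / (d : ℝ))))
    (Tlam : ℕ) (hTlam : ∀ t : ℕ, Tlam ≤ t →
      Ctil * (t : ℝ) ^ (-(2 * ν / (d : ℝ))) * Real.log (t : ℝ) ^ (2 * ν / (d : ℝ)) ≤ lamBar ^ 2)
    (TMat : ℕ) (hTMat : TMat = max 4 (max T0 Tlam)) :
    (∀ T : ℕ, TMat ≤ T → ∀ xs : Fin T → X,
        sInf (Set.range fun t : Fin T => postStd k (pre xs t) (xs t)) ≤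
          Real.sqrt Ctil * (T : ℝ) ^ (-(ν / (d : ℝ))) *
            Real.log (T : ℝ) ^ (ν / (d : ℝ))) ∧
      ∀ T : ℕ, 0 < T → ∀ xs : Fin T → X,
        sInf (Set.range fun t : Fin T => postStd k (pre xs t) (xs t)) ≤ 1 := by
  have hK {n : ℕ} (xs : Fin n → X) := gram_posSemidef hsym hpsd xs
  refine ⟨fun T hT xs => ?_, fun T hT xs => sInf_postStd_le_one hT (hK xs) hk1⟩
  simp only [hTMat, max_le_iff] at hT
  obtain ⟨hT4, hT0T, hTlamT⟩ := hT
  have hT4ℝ : (4 : ℝ) ≤ T := by exact_mod_cast hT4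
  have hTpos : (0 : ℝ) < T := by linarith
  have hlogT : 1 ≤ Real.log T :=
    (Real.le_log_iff_exp_le hTpos).2 (by linarith [Real.exp_one_lt_d9])
  have hCt1 : 1 ≤ Ctil := (le_max_left _ _).trans_eq hCtil.symm
  rw [← sqrt_mul_rpow_neg_mul_rpow (by positivity) hTpos.le (by positivity)]
  set lam2 := Ctil * (T : ℝ) ^ (-(2 * ν / d)) * Real.log T ^ (2 * ν / d)
  rcases le_or_gt lam2 1 with hsmall | hbig
  · have hlam : 0 < √lam2 := Real.sqrt_pos.2 (by positivity)
    have hgainT := hgain _ hlam ((Real.sqrt_le_left hlamBar.le).2 (hTlam T hTlamT)) T hT0T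
    rw [Real.sq_sqrt (by positivity)] at hgainT
    have hlogdet := half_log_det_le_of_mig_le (by positivity) (hgainT.trans <|
      ENNReal.ofReal_le_ofReal <| matern_gain_le hCMat (by positivity) (Nat.cast_pos.2 hd) hCt1
        ((le_max_right _ _).trans_eq hCtil.symm) hTpos hlogT hsmall) xs
    refine sInf_postStd_le_of_log_det_le (by omega) (hK xs) hlam ?_
    calc _ ≤ (T : ℝ) * (1 / 3) := by linarith
      _ ≤ T * Real.log 2 := by gcongr; linarith [Real.log_two_gt_d9]
  · exact (sInf_postStd_le_one (by omega) (hK xs) hk1).trans (Real.one_le_sqrt.2 hbig.le)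

/-- Minimum posterior standard deviation under a Matérn-type information-gain bound. -/
theorem min_postStd_matern
{X : Type*} [Nonempty X] (k : X → X → ℝ)
    (hsym : ∀ x y : X, k x y = k y x)
    (hpsd : ∀ (n : ℕ) (xv : Fin n → X) (c : Fin n → ℝ),
      0 ≤ ∑ i, ∑ j, c i * c j * k (xv i) (xv j))
    (hk1 : ∀ x : X, k x x ≤ 1)
    (CMat lamBar : ℝ) (hCMat : 0 < CMat) (hlamBar : 0 < lamBar)
    (T0 : ℕ) (hT0 : 2 ≤ T0) (d : ℕ) (hd : 1 ≤ d) (ν : ℝ) (hν : 0 < ν)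
    (hgain : ∀ lam : ℝ, 0 < lam → lam ≤ lamBar → ∀ t : ℕ, T0 ≤ t →
      mig k t lam ≤ ENNReal.ofReal
        (CMat * ((t : ℝ) / lam ^ 2) ^ ((d : ℝ) / (2 * ν + (d : ℝ))) *
          Real.log ((t : ℝ) / lam ^ 2) ^ (2 * ν / (2 * ν + (d : ℝ)))))
    (Ctil : ℝ) (hCtil : Ctil = max 1
      ((2 + 2 * ν / (d : ℝ)) ^ (2 * ν / (d : ℝ)) * (6 * CMat) ^ (1 + 2 * ν / (d : ℝ))))
    (Tlam : ℕ) (hTlam : ∀ t : ℕ, Tlam ≤ t →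
      Ctil * (t : ℝ) ^ (-(2 * ν / (d : ℝ))) * Real.log (t : ℝ) ^ (2 * ν / (d : ℝ)) ≤ lamBar ^ 2)
    (TMat : ℕ) (hTMat : TMat = max 4 (max T0 Tlam)) :
    (∀ T : ℕ, TMat ≤ T → ∀ xs : Fin T → X,
        sInf (Set.range fun t : Fin T => postStd k (pre xs t) (xs t)) ≤
          Real.sqrt Ctil * (T : ℝ) ^ (-(ν / (d : ℝ))) *
            Real.log (T : ℝ) ^ (ν / (d : ℝ))) ∧
      ∀ T : ℕ, 0 < T → ∀ xs : Fin T → X,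
        sInf (Set.range fun t : Fin T => postStd k (pre xs t) (xs t)) ≤ 1 :=
  min_postStd_matern_general k hsym hpsd hk1 CMat lamBar hCMat hlamBar T0 d hd ν hν hgain Ctil hCtil
    Tlam hTlam TMat hTMat
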